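/- arXiv:2502.07933 — 3 statements merged into one kernel-verified Lean document; each statement's English description precedes it below -/
import Mathlib

section
/- If the skeleton of a digraph D has chromatic number at most 6, then lir(D) ≤ 3. -/
/-! Colour the skeleton properly with the six colours `(b, i) : Bool × Fin 3`. In arc class `k`,
colour `(true, k)` is to be a sink, while `(false, k)` and the colours `(true, i)` with `i ≠ k` are
to be sources. Any two distinct colours admit a class in which an arc between them respects these
roles and starts at a source or ends at a sink. Put every arc into such a class: its tail then has
positive outdegree and its head positive indegree, while its tail has indegree `0` or its head
outdegree `0`, so its endpoints have different degree pairs. -/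

/- A digraph on vertex set `V` is given by its finite arc set `E ⊆ V × V`
(arcs in both directions between two vertices are allowed, loops are excluded
via explicit hypotheses). -/

/-- The outdegree of a vertex. -/
def outdeg {V : Type*} [DecidableEq V] (E : Finset (V × V)) (v : V) : ℕ :=
  (E.filter fun a => a.1 = v).card

/-- The indegree of a vertex. -/
def indeg {V : Type*} [DecidableEq V] (E : Finset (V × V)) (v : V) : ℕ :=
  (E.filter fun a => a.2 = v).card

/-- The balanced degree of a vertex. -/
def bdeg {V : Type*} [DecidableEq V] (E : Finset (V × V)) (v : V) : ℤ :=
  (outdeg E v : ℤ) - (indeg E v : ℤ)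

/-- A digraph is weak locally irregular if the endpoints of every arc have
different outdegree-indegree pairs. -/
def WeakLI {V : Type*} [DecidableEq V] (E : Finset (V × V)) : Prop :=
  ∀ a ∈ E, (outdeg E a.1, indeg E a.1) ≠ (outdeg E a.2, indeg E a.2)

/-- A digraph is strong locally irregular if the endpoints of every arc have
different balanced degrees. -/
def StrongLI {V : Type*} [DecidableEq V] (E : Finset (V × V)) : Prop :=
  ∀ a ∈ E, bdeg E a.1 ≠ bdeg E a.2

/-- `lirLe E n` : the arcs of `E` admit a coloring with at most `n` colors in
which every color class induces a weak locally irregular digraph. -/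
def lirLe {V : Type*} [DecidableEq V] (E : Finset (V × V)) (n : ℕ) : Prop :=
  ∃ c : V × V → Fin n, ∀ i : Fin n, WeakLI (E.filter fun a => c a = i)

/-- `slirLe E n` : the arcs of `E` admit a coloring with at most `n` colors in
which every color class induces a strong locally irregular digraph. -/
def slirLe {V : Type*} [DecidableEq V] (E : Finset (V × V)) (n : ℕ) : Prop :=
  ∃ c : V × V → Fin n, ∀ i : Fin n, StrongLI (E.filter fun a => c a = i)

/-- The skeleton of a digraph: the simple graph obtained by replacing each arc
or pair of opposite arcs with a single edge. -/
def skeleton {V : Type*} [DecidableEq V] (E : Finset (V × V)) : SimpleGraph V where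
  Adj u v := u ≠ v ∧ ((u, v) ∈ E ∨ (v, u) ∈ E)
  symm := by
    constructor
    intro u v h
    exact ⟨h.1.symm, h.2.elim Or.inr Or.inl⟩
  loopless := by
    constructor
    intro v h
    exact h.1 rfl

/-- `E'` is an orientation of the simple graph `G`: its arcs lie on edges of `G`
and every edge of `G` receives exactly one direction. -/
def IsOrientationOf {V : Type*} [DecidableEq V] (E' : Finset (V × V))
    (G : SimpleGraph V) : Prop :=
  (∀ a ∈ E', G.Adj a.1 a.2) ∧ (∀ u v : V, G.Adj u v → ((u, v) ∈ E' ↔ (v, u) ∉ E'))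

/-- An outdegree-decreasing acyclic digraph: vertices can be linearly ordered so
that every arc goes forward and outdegrees are nonincreasing along the order. -/
def OutdegDecAcyclic {V : Type*} [DecidableEq V] (E : Finset (V × V)) : Prop :=
  ∃ r : V → ℕ, Function.Injective r ∧ (∀ a ∈ E, r a.1 ≤ r a.2) ∧
    ∀ u v : V, r u < r v → outdeg E v ≤ outdeg E u

/-- An indegree-increasing acyclic digraph: vertices can be linearly ordered so
that every arc goes backward and indegrees are nondecreasing along the order. -/
def IndegIncAcyclic {V : Type*} [DecidableEq V] (E : Finset (V × V)) : Prop :=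
  ∃ r : V → ℕ, Function.Injective r ∧ (∀ a ∈ E, r a.2 ≤ r a.1) ∧
    ∀ u v : V, r u ≤ r v → indeg E u ≤ indeg E v

section WeakLI

variable {V : Type*} [DecidableEq V] {F : Finset (V × V)}

theorem outdeg_fst_pos {a : V × V} (ha : a ∈ F) : 0 < outdeg F a.1 :=
  Finset.card_pos.mpr ⟨a, Finset.mem_filter.mpr ⟨ha, rfl⟩⟩

theorem indeg_snd_pos {a : V × V} (ha : a ∈ F) : 0 < indeg F a.2 :=
  Finset.card_pos.mpr ⟨a, Finset.mem_filter.mpr ⟨ha, rfl⟩⟩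

theorem outdeg_eq_zero_iff {v : V} : outdeg F v = 0 ↔ ∀ a ∈ F, a.1 ≠ v := by
  simp [outdeg, Finset.filter_eq_empty_iff]

theorem indeg_eq_zero_iff {v : V} : indeg F v = 0 ↔ ∀ a ∈ F, a.2 ≠ v := by
  simp [indeg, Finset.filter_eq_empty_iff]

theorem weakLI_of_source_tail_or_sink_head
    (h : ∀ a ∈ F, indeg F a.1 = 0 ∨ outdeg F a.2 = 0) : WeakLI F := by
  intro a ha heq
  have hzero := h a ha
  have hout := outdeg_fst_pos ha
  have hin := indeg_snd_pos ha
  simp only [Prod.mk.injEq] at heq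
  omega

end WeakLI

/-- The hypothesis makes the vertices of `src i` sources and those of `snk i` sinks of class `i`. -/
theorem lirLe_of_sources_sinks {V : Type*} [DecidableEq V] {n : ℕ} (E : Finset (V × V))
    (c : V × V → Fin n) (src snk : Fin n → Set V)
    (h : ∀ a ∈ E, (a.1 ∈ src (c a) ∨ a.2 ∈ snk (c a)) ∧ a.1 ∉ snk (c a) ∧ a.2 ∉ src (c a)) :
    lirLe E n := by
  refine ⟨c, fun i => weakLI_of_source_tail_or_sink_head fun a ha => ?_⟩
  obtain ⟨haE, rfl⟩ := Finset.mem_filter.mp ha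
  rcases (h a haE).1 with hsrc | hsnk
  · refine .inl (indeg_eq_zero_iff.mpr fun b hb hba => ?_)
    obtain ⟨hbE, hbc⟩ := Finset.mem_filter.mp hb
    exact (h b hbE).2.2 (hbc ▸ hba ▸ hsrc)
  · refine .inr (outdeg_eq_zero_iff.mpr fun b hb hba => ?_)
    obtain ⟨hbE, hbc⟩ := Finset.mem_filter.mp hb
    exact (h b hbE).2.1 (hbc ▸ hba ▸ hsnk)

def IsSource (x : Bool × Fin 3) (k : Fin 3) : Prop :=
  x.1 = true ∧ k ≠ x.2 ∨ x.1 = false ∧ k = x.2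

def IsSink (x : Bool × Fin 3) (k : Fin 3) : Prop :=
  x.1 = true ∧ k = x.2

theorem exists_class_isSource_or_isSink :
    ∃ cls : Bool × Fin 3 → Bool × Fin 3 → Fin 3, ∀ x y, x ≠ y →
      (IsSource x (cls x y) ∨ IsSink y (cls x y)) ∧ ¬IsSink x (cls x y) ∧
        ¬IsSource y (cls x y) := by
  have h : ∀ x y : Bool × Fin 3, ∃ k, x ≠ y →
      (IsSource x k ∨ IsSink y k) ∧ ¬IsSink x k ∧ ¬IsSource y k := by
    unfold IsSource IsSink
    decide
  choose cls hcls using h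
  exact ⟨cls, hcls⟩

theorem stmt2 {V : Type*} [DecidableEq V] (E : Finset (V × V))
    (hloop : ∀ v : V, (v, v) ∉ E)
    (hchrom : (skeleton E).chromaticNumber ≤ 6) :
    lirLe E 3 := by
  have C : (skeleton E).Coloring (Bool × Fin 3) :=
    (SimpleGraph.chromaticNumber_le_iff_colorable.mp hchrom).toColoring (by simp)
  have hproper : ∀ a ∈ E, C a.1 ≠ C a.2 := fun ⟨u, v⟩ ha =>
    C.valid ⟨fun (h : u = v) => hloop u (h ▸ ha), Or.inl ha⟩
  obtain ⟨cls, hcls⟩ := exists_class_isSource_or_isSink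
  exact lirLe_of_sources_sinks E (fun a => cls (C a.1) (C a.2))
    (fun k => {v | IsSource (C v) k}) (fun k => {v | IsSink (C v) k})
    fun a ha => hcls _ _ (hproper a ha)
end

section
/- If the skeleton of a digraph D is k-partite for some k ∈ {7,8,9}, then lir(D) ≤ 4. -/
/-! Take a proper 9-colouring of the skeleton and an antichain of nine vectors in `{0,1,2}^4`,
one per colour. An arc between colour classes `i ≠ j` gets a coordinate `t` in which the vector
of `i` is strictly below that of `j`. Within arc colour `t` every arc then climbs strictly through
the three levels `0 < 1 < 2`, so its tail is a source (level 0) or its head is a sink (level 2),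
while the other endpoint has the corresponding degree positive. -/

section Potential

variable {V : Type*} [DecidableEq V] {E : Finset (V × V)}

lemma indeg_pos_of_mem {a : V × V} (ha : a ∈ E) : 0 < indeg E a.2 :=
  Finset.card_pos.mpr ⟨a, Finset.mem_filter.mpr ⟨ha, rfl⟩⟩

lemma outdeg_pos_of_mem {a : V × V} (ha : a ∈ E) : 0 < outdeg E a.1 :=
  Finset.card_pos.mpr ⟨a, Finset.mem_filter.mpr ⟨ha, rfl⟩⟩

variable (f : V → ℕ) (hE : ∀ a ∈ E, f a.1 < f a.2)
include hE

lemma indeg_eq_zero_of_forall_le {v : V} (hv : ∀ w, f v ≤ f w) : indeg E v = 0 := by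
  refine Finset.card_eq_zero.mpr (Finset.filter_eq_empty_iff.mpr fun a ha hav => ?_)
  have := hE a ha
  have := hv a.1
  rw [hav] at *
  omega

lemma outdeg_eq_zero_of_forall_le {v : V} (hv : ∀ w, f w ≤ f v) : outdeg E v = 0 := by
  refine Finset.card_eq_zero.mpr (Finset.filter_eq_empty_iff.mpr fun a ha hav => ?_)
  have := hE a ha
  have := hv a.2
  rw [hav] at *
  omega

lemma weakLI_of_forall_lt_of_le_two (hf : ∀ v, f v ≤ 2) : WeakLI E := by
  intro a ha heq
  obtain ⟨hout, hin⟩ := Prod.mk.inj heq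
  rcases Nat.eq_zero_or_pos (f a.1) with h0 | hpos
  · have hsource := indeg_eq_zero_of_forall_le f hE (v := a.1) fun w => h0 ▸ Nat.zero_le _
    have := indeg_pos_of_mem ha
    omega
  · have htop : f a.2 = 2 := by have := hE a ha; have := hf a.2; omega
    have hsink := outdeg_eq_zero_of_forall_le f hE (v := a.2) fun w => htop ▸ hf w
    have := outdeg_pos_of_mem ha
    omega

end Potential

lemma skeleton_adj_of_mem {V : Type*} [DecidableEq V] {E : Finset (V × V)}
    (hloop : ∀ v : V, (v, v) ∉ E) {a : V × V} (ha : a ∈ E) : (skeleton E).Adj a.1 a.2 :=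
  ⟨fun h => hloop a.1 (by obtain ⟨u, v⟩ := a; dsimp only at h ⊢; rwa [← h] at ha), Or.inl ha⟩

lemma lirLe_of_colorable_of_antichain {V : Type*} [DecidableEq V] {E : Finset (V × V)}
    {n m : ℕ} [NeZero m] (w : Fin n → Fin m → ℕ) (hw_le : ∀ i t, w i t ≤ 2)
    (hw : ∀ i j, i ≠ j → ∃ t, w i t < w j t) (hloop : ∀ v : V, (v, v) ∉ E)
    (hcol : (skeleton E).Colorable n) : lirLe E m := by
  obtain ⟨C⟩ := hcol
  choose sep hsep using hw
  refine ⟨fun a => if h : C a.1 = C a.2 then 0 else sep _ _ h, fun t =>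
    weakLI_of_forall_lt_of_le_two (fun v => w (C v) t) ?_ fun v => hw_le _ _⟩
  intro a ha
  obtain ⟨haE, hat⟩ := Finset.mem_filter.mp ha
  have hC : C a.1 ≠ C a.2 := C.valid (skeleton_adj_of_mem hloop haE)
  simp only [dif_neg hC] at hat
  exact hat ▸ hsep _ _ hC

def antichainFin9 : Fin 9 → Fin 4 → ℕ :=
  ![![2,2,0,0], ![2,0,2,0], ![2,0,0,2], ![0,2,2,0], ![0,2,0,2], ![0,0,2,2],
    ![1,1,1,1], ![2,1,1,0], ![0,1,1,2]]

lemma antichainFin9_le_two : ∀ i t, antichainFin9 i t ≤ 2 := by decide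

lemma antichainFin9_separates : ∀ i j, i ≠ j → ∃ t, antichainFin9 i t < antichainFin9 j t := by
  decide

theorem stmt4 {V : Type*} [DecidableEq V] (E : Finset (V × V))
    (hloop : ∀ v : V, (v, v) ∉ E) (k : ℕ) (hk : k ∈ ({7, 8, 9} : Set ℕ))
    (hpart : (skeleton E).Colorable k) :
    lirLe E 4 := by
  have hk9 : k ≤ 9 := by rcases hk with rfl | rfl | rfl <;> norm_num
  exact lirLe_of_colorable_of_antichain antichainFin9 antichainFin9_le_two
    antichainFin9_separates hloop (hpart.mono hk9)
end

section
/- If D is an Eulerian digraph (connected with d^+(v) = d^-(v) for every vertex v), then slir(D) ≤ 2. -/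
/-!
Choose `A ⊆ E` maximizing `Φ(A) = ∑_w σ_A(w)²`. Adding an arc `uv ∉ A` to `A` raises `Φ` by
`2 (σ_A(u) - σ_A(v)) + 2`, and removing an arc `uv ∈ A` changes it by `2 - 2 (σ_A(u) - σ_A(v))`,
so maximality forces `σ_A(u) ≠ σ_A(v)` for every arc `uv` of `E`. In an Eulerian digraph
`σ_E = 0`, hence `σ_{E \ A} = -σ_A`, and the partition `A, E \ A` is a 2-coloring into strong
locally irregular digraphs.
-/

open Finset

section BalancedDegree

variable {V : Type*} [DecidableEq V]

lemma outdeg_union {A B : Finset (V × V)} (h : Disjoint A B) (w : V) :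
    outdeg (A ∪ B) w = outdeg A w + outdeg B w := by
  unfold outdeg
  rw [filter_union, card_union_of_disjoint (disjoint_filter_filter h)]

lemma indeg_union {A B : Finset (V × V)} (h : Disjoint A B) (w : V) :
    indeg (A ∪ B) w = indeg A w + indeg B w := by
  unfold indeg
  rw [filter_union, card_union_of_disjoint (disjoint_filter_filter h)]

lemma bdeg_union {A B : Finset (V × V)} (h : Disjoint A B) (w : V) :
    bdeg (A ∪ B) w = bdeg A w + bdeg B w := by
  unfold bdeg
  rw [outdeg_union h, indeg_union h]
  push_cast
  ring

lemma bdeg_singleton (u v w : V) :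
    bdeg {(u, v)} w = (if u = w then 1 else 0) - (if v = w then 1 else 0) := by
  unfold bdeg outdeg indeg
  simp only [filter_singleton]
  split_ifs <;> simp

lemma bdeg_insert {A : Finset (V × V)} {u v : V} (h : (u, v) ∉ A) (w : V) :
    bdeg (insert (u, v) A) w
      = bdeg A w + (if u = w then 1 else 0) - (if v = w then 1 else 0) := by
  rw [insert_eq, bdeg_union (disjoint_singleton_left.2 h), bdeg_singleton]
  ring

lemma bdeg_sdiff {A E : Finset (V × V)} (h : A ⊆ E) (w : V) :
    bdeg (E \ A) w = bdeg E w - bdeg A w := by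
  rw [← union_sdiff_of_subset h, bdeg_union disjoint_sdiff, union_sdiff_of_subset h]
  ring

lemma sum_sq_bdeg_insert {S : Finset V} {A : Finset (V × V)} {u v : V} (h : (u, v) ∉ A)
    (huv : u ≠ v) (hu : u ∈ S) (hv : v ∈ S) :
    ∑ w ∈ S, bdeg (insert (u, v) A) w ^ 2
      = ∑ w ∈ S, bdeg A w ^ 2 + 2 * (bdeg A u - bdeg A v) + 2 := by
  have hdiff : ∑ w ∈ S, (bdeg (insert (u, v) A) w ^ 2 - bdeg A w ^ 2)
      = 2 * (bdeg A u - bdeg A v) + 2 := by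
    rw [← sum_subset (insert_subset hu (singleton_subset_iff.2 hv)), sum_pair huv,
      bdeg_insert h, bdeg_insert h]
    · simp only [if_pos, if_neg huv, if_neg huv.symm]
      ring
    · intro w _ hw
      simp only [mem_insert, mem_singleton, not_or] at hw
      rw [bdeg_insert h, if_neg (Ne.symm hw.1), if_neg (Ne.symm hw.2)]
      ring
  rw [sum_sub_distrib] at hdiff
  linarith

theorem exists_subset_forall_bdeg_ne (E : Finset (V × V)) (hloop : ∀ v : V, (v, v) ∉ E) :
    ∃ A ⊆ E, ∀ a ∈ E, bdeg A a.1 ≠ bdeg A a.2 := by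
  set S := E.image Prod.fst ∪ E.image Prod.snd
  obtain ⟨A, hAE, hmax⟩ := E.powerset.exists_max_image (fun A => ∑ w ∈ S, bdeg A w ^ 2)
    ⟨∅, empty_mem_powerset E⟩
  rw [mem_powerset] at hAE
  refine ⟨A, hAE, ?_⟩
  rintro ⟨u, v⟩ huvE (heq : bdeg A u = bdeg A v)
  have huv : u ≠ v := fun h => hloop v (h ▸ huvE)
  have hu : u ∈ S := mem_union_left _ (mem_image_of_mem Prod.fst huvE)
  have hv : v ∈ S := mem_union_right _ (mem_image_of_mem Prod.snd huvE)
  by_cases hin : (u, v) ∈ A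
  · set B := A.erase (u, v)
    have hnB : (u, v) ∉ B := notMem_erase _ _
    have hBA : insert (u, v) B = A := insert_erase hin
    have hbu : bdeg A u = bdeg B u + 1 := by
      rw [← hBA, bdeg_insert hnB, if_pos rfl, if_neg huv.symm]
      ring
    have hbv : bdeg A v = bdeg B v - 1 := by
      rw [← hBA, bdeg_insert hnB, if_neg huv, if_pos rfl]
      ring
    have hgrow := sum_sq_bdeg_insert hnB huv hu hv
    rw [hBA] at hgrow
    have hle := hmax B (mem_powerset.2 ((erase_subset _ _).trans hAE))
    linarith
  · have hgrow := sum_sq_bdeg_insert hin huv hu hv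
    have hle := hmax _ (mem_powerset.2 (insert_subset huvE hAE))
    linarith

lemma strongLI_sdiff {E A : Finset (V × V)} (hbal : ∀ v, bdeg E v = 0) (hAE : A ⊆ E)
    (hA : ∀ a ∈ E, bdeg A a.1 ≠ bdeg A a.2) : StrongLI (E \ A) := by
  intro a ha
  rw [bdeg_sdiff hAE, bdeg_sdiff hAE, hbal, hbal, Ne, sub_right_inj]
  exact hA a (mem_sdiff.1 ha).1

lemma slirLe_two_of_subset {E A : Finset (V × V)} (hAE : A ⊆ E) (hA : StrongLI A)
    (hEA : StrongLI (E \ A)) : slirLe E 2 := by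
  refine ⟨fun a => if a ∈ A then 0 else 1, fun i => ?_⟩
  fin_cases i
  · convert hA using 1
    ext a
    simpa using fun ha => hAE ha
  · convert hEA using 1
    ext a
    simp

end BalancedDegree

theorem stmt19_general {V : Type*} [DecidableEq V] (E : Finset (V × V))
    (hloop : ∀ v : V, (v, v) ∉ E)
    (heul : ∀ v : V, outdeg E v = indeg E v) :
    slirLe E 2 := by
  obtain ⟨A, hAE, hA⟩ := exists_subset_forall_bdeg_ne E hloop
  have hbal : ∀ v, bdeg E v = 0 := fun v => by simp [bdeg, heul v]
  exact slirLe_two_of_subset hAE (fun a ha => hA a (hAE ha)) (strongLI_sdiff hbal hAE hA)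

theorem stmt19 {V : Type*} [DecidableEq V] (E : Finset (V × V))
    (hloop : ∀ v : V, (v, v) ∉ E)
    (hconn : (skeleton E).Connected)
    (heul : ∀ v : V, outdeg E v = indeg E v) :
    slirLe E 2 :=
  stmt19_general E hloop heul
end
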